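/- arXiv:1504.06232 — 7 statements merged into one kernel-verified Lean document; each statement's English description precedes it below -/
import Mathlib

section
/- Let b > 2 be an integer and let G be a b-dc-semigroup. If i, j are non-negative integers, k, l are positive integers, and both I_b(i,k) ⊆ G and I_b(j,l) ⊆ G, then I_b(i+j, k+l) ⊆ G. -/
/-- `Ib b i k` is the set of integers `x` with `b^i ≤ x < b^(i+k)`. -/
def Ib (b i k : ℕ) : Set ℕ := {x : ℕ | b ^ i ≤ x ∧ x < b ^ (i + k)}

/-- A set `G` of positive integers is a `b`-dc-semigroup if it is closed under
multiplication and closed with respect to the number of base-`b` digits. -/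
def IsDCSemigroup (b : ℕ) (G : Set ℕ) : Prop :=
  (∀ x ∈ G, 0 < x) ∧
  (∀ x ∈ G, ∀ y ∈ G, x * y ∈ G) ∧
  (∀ x ∈ G, ∀ y : ℕ, 0 < y → Nat.log b y = Nat.log b x → y ∈ G)

/-!
By digit closure, `Ib b i k ⊆ G` as soon as `G` contains, for each `i ≤ m < i + k`, a number whose
base-`b` logarithm is `m`. For `I_b(i+j, k+l)`, every such `m` except the largest is `s + t` with
`b^s ∈ I_b(i,k)` and `b^t ∈ I_b(j,l)`, so `b^s * b^t` does. The largest, `m = i+k+j+l-1`, is the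
logarithm of `(b^(i+k) - 1) * (b^(j+l) - 1)`, since for `b ≥ 3` subtracting `1` from both factors
loses less than a factor `b`.
-/

theorem mem_Ib_iff {b i k x : ℕ} (hb : 1 < b) :
    x ∈ Ib b i k ↔ x ≠ 0 ∧ i ≤ Nat.log b x ∧ Nat.log b x < i + k := by
  by_cases hx : x = 0
  · have := Nat.one_le_pow i b (by omega)
    simp only [Ib, Set.mem_ofPred_eq, hx]
    omega
  · simp only [Ib, Set.mem_ofPred_eq, Nat.le_log_iff_pow_le hb hx, Nat.log_lt_iff_lt_pow hb hx,
      ne_eq, hx, not_false_eq_true, true_and]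

theorem pow_mem_Ib {b i k s : ℕ} (hb : 1 < b) (hs₁ : i ≤ s) (hs₂ : s < i + k) :
    b ^ s ∈ Ib b i k := by
  rw [mem_Ib_iff hb, Nat.log_pow hb]
  exact ⟨pow_ne_zero _ (by omega), hs₁, hs₂⟩

theorem pred_pow_mem_Ib {b i k : ℕ} (hb : 1 < b) (hk : 0 < k) : b ^ (i + k) - 1 ∈ Ib b i k :=
  ⟨Nat.le_sub_one_of_lt (Nat.pow_lt_pow_right hb (by omega)),
    Nat.sub_lt (Nat.one_le_pow _ _ (by omega)) one_pos⟩

theorem log_pred_pow_mul_pred_pow {b a c : ℕ} (hb : 2 < b) (ha : 0 < a) (hc : 0 < c) :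
    Nat.log b ((b ^ a - 1) * (b ^ c - 1)) = a + c - 1 := by
  obtain ⟨A, hA⟩ := Nat.exists_eq_add_one_of_ne_zero (pow_ne_zero a (by omega : b ≠ 0))
  obtain ⟨C, hC⟩ := Nat.exists_eq_add_one_of_ne_zero (pow_ne_zero c (by omega : b ≠ 0))
  have hbA : b ≤ A + 1 := hA ▸ Nat.le_self_pow ha.ne' b
  have hbC : b ≤ C + 1 := hC ▸ Nat.le_self_pow hc.ne' b
  have hAC : b * b ^ (a + c - 1) = (A + 1) * (C + 1) := by
    rw [← pow_succ', ← hA, ← hC, ← pow_add]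
    congr 1
    omega
  rw [hA, hC, Nat.add_sub_cancel, Nat.add_sub_cancel]
  apply Nat.log_eq_of_pow_le_of_lt_pow
  · refine le_of_mul_le_mul_left ?_ (by omega : 0 < b)
    rw [hAC]
    have hA₂ : 2 ≤ A := by omega
    have hC₂ : 2 ≤ C := by omega
    -- `(A + 1) * (C + 1) ≤ 3 * (A * C)` once `A, C ≥ 2`
    nlinarith [Nat.mul_le_mul_right (A * C) (hb : 3 ≤ b)]
  · rw [Nat.sub_add_cancel (by omega), pow_add, hA, hC]
    exact Nat.mul_lt_mul'' (by omega) (by omega)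

namespace IsDCSemigroup

variable {b : ℕ} {G : Set ℕ}

theorem mul_mem (hG : IsDCSemigroup b G) {x y : ℕ} (hx : x ∈ G) (hy : y ∈ G) : x * y ∈ G :=
  hG.2.1 x hx y hy

theorem Ib_subset_of_forall_exists_log (hG : IsDCSemigroup b G) (hb : 1 < b) {i k : ℕ}
    (h : ∀ m, i ≤ m → m < i + k → ∃ y ∈ G, Nat.log b y = m) : Ib b i k ⊆ G := by
  intro x hx
  obtain ⟨hx₀, hm₁, hm₂⟩ := (mem_Ib_iff hb).mp hx
  obtain ⟨y, hy, hlog⟩ := h _ hm₁ hm₂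
  exact hG.2.2 y hy x (Nat.pos_of_ne_zero hx₀) hlog.symm

end IsDCSemigroup

theorem stmt_1 (b : ℕ) (hb : 2 < b) (G : Set ℕ) (hG : IsDCSemigroup b G)
    (i j k l : ℕ) (hk : 0 < k) (hl : 0 < l)
    (h1 : Ib b i k ⊆ G) (h2 : Ib b j l ⊆ G) :
    Ib b (i + j) (k + l) ⊆ G := by
  have hb₁ : 1 < b := by omega
  refine hG.Ib_subset_of_forall_exists_log hb₁ fun m hm₁ hm₂ => ?_
  by_cases htop : m = i + k + (j + l) - 1
  · refine ⟨_, hG.mul_mem (h1 (pred_pow_mem_Ib hb₁ hk)) (h2 (pred_pow_mem_Ib hb₁ hl)), ?_⟩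
    rw [log_pred_pow_mul_pred_pow hb (by omega) (by omega), htop]
  · obtain ⟨s, t, hs₁, hs₂, ht₁, ht₂, rfl⟩ :
        ∃ s t, i ≤ s ∧ s < i + k ∧ j ≤ t ∧ t < j + l ∧ m = s + t :=
      ⟨max i (m - (j + l - 1)), m - max i (m - (j + l - 1)), by omega, by omega, by omega,
        by omega, by omega⟩
    refine ⟨_, hG.mul_mem (h1 (pow_mem_Ib hb₁ hs₁ hs₂)) (h2 (pow_mem_Ib hb₁ ht₁ ht₂)), ?_⟩
    rw [← pow_add, Nat.log_pow hb₁]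
end

section
/- Let b ≥ 2 be an integer, G a b-dc-semigroup, j a non-negative integer and l a positive integer such that I_b(j,l) ⊆ G. Assume also that b > 2 or j + l ≥ 2. Then for every positive integer q, I_b(q·j, q·l) ⊆ G. -/
theorem Set.Ico_mul_subset_of_add_mem {E : Set ℕ} {m j l : ℕ}
    (hadd : ∀ a ∈ E, ∀ c ∈ E, a + c ∈ E)
    (hsucc : ∀ a ∈ E, ∀ c ∈ E, m ≤ a → m ≤ c → a + c + 1 ∈ E)
    (hl : 0 < l) (hm : m < j + l) (hE : Set.Ico j (j + l) ⊆ E) {q : ℕ} (hq : 0 < q) :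
    Set.Ico (q * j) (q * j + q * l) ⊆ E := by
  induction q, hq using Nat.le_induction with
  | base => simpa using hE
  | succ q hq ih =>
    rintro i ⟨hi₁, hi₂⟩
    have hqj : j ≤ q * j := Nat.le_mul_of_pos_left j hq
    have hql : l ≤ q * l := Nat.le_mul_of_pos_left l hq
    simp only [add_one_mul] at hi₁ hi₂
    by_cases hlast : i + 1 = q * j + q * l + (j + l)
    · obtain rfl : i = (j + l - 1) + (q * j + q * l - 1) + 1 := by omega
      exact hsucc _ (hE ⟨by omega, by omega⟩) _ (ih ⟨by omega, by omega⟩) (by omega) (by omega)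
    · set c := min (q * j + q * l - 1) (i - j)
      have ha : i - c ∈ Set.Ico j (j + l) := ⟨by omega, by omega⟩
      have hc : c ∈ Set.Ico (q * j) (q * j + q * l) := ⟨by omega, by omega⟩
      simpa [Nat.sub_add_cancel (by omega : c ≤ i)] using hadd _ (hE ha) _ (ih hc)

theorem pow_add_add_one_le_mul {b a c : ℕ} (hb : 2 ≤ b) (h : 2 < b ∨ 1 ≤ a ∧ 1 ≤ c) :
    b ^ (a + c + 1) ≤ (b ^ (a + 1) - 1) * (b ^ (c + 1) - 1) := by
  have hA : 1 ≤ b ^ a := Nat.one_le_pow _ _ (by omega)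
  have hC : 1 ≤ b ^ c := Nat.one_le_pow _ _ (by omega)
  -- with `A = b ^ a`, `C = b ^ c`, `(bA - 1)(bC - 1) ≥ bAC` is equivalent to `b (A + C) ≤ b (b - 1) AC + 1`
  have key : b ^ a + b ^ c ≤ (b - 1) * (b ^ a * b ^ c) := by
    rcases h with hb3 | ⟨ha, hc⟩
    · have : b ^ a ≤ b ^ a * b ^ c := Nat.le_mul_of_pos_right _ hC
      have : b ^ c ≤ b ^ a * b ^ c := Nat.le_mul_of_pos_left _ hA
      have : 2 * (b ^ a * b ^ c) ≤ (b - 1) * (b ^ a * b ^ c) := Nat.mul_le_mul_right _ (by omega)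
      omega
    · calc b ^ a + b ^ c ≤ b ^ a * b ^ c :=
            add_le_mul (hb.trans (Nat.le_self_pow (by omega) b))
              (hb.trans (Nat.le_self_pow (by omega) b))
        _ ≤ (b - 1) * (b ^ a * b ^ c) := Nat.le_mul_of_pos_left _ (by omega)
  rw [pow_succ, pow_succ, pow_succ, pow_add]
  zify [Nat.one_le_iff_ne_zero.mpr (by positivity : b ^ a * b ≠ 0),
    Nat.one_le_iff_ne_zero.mpr (by positivity : b ^ c * b ≠ 0), (by omega : 1 ≤ b)] at key ⊢
  nlinarith

namespace IsDCSemigroup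

variable {b : ℕ} {G : Set ℕ}

theorem mem_of_pow_mem (hG : IsDCSemigroup b G) (hb : 1 < b) {i x : ℕ} (hi : b ^ i ∈ G)
    (h₁ : b ^ i ≤ x) (h₂ : x < b ^ (i + 1)) : x ∈ G :=
  hG.2.2 _ hi x ((Nat.pow_pos (n := i) (by omega)).trans_le h₁) <| by
    rw [Nat.log_pow hb, Nat.log_eq_of_pow_le_of_lt_pow h₁ h₂]

theorem pow_mem_of_mem (hG : IsDCSemigroup b G) (hb : 1 < b) {i x : ℕ} (hx : x ∈ G)
    (h₁ : b ^ i ≤ x) (h₂ : x < b ^ (i + 1)) : b ^ i ∈ G :=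
  hG.2.2 x hx _ (Nat.pow_pos (n := i) (by omega)) <| by
    rw [Nat.log_pow hb, Nat.log_eq_of_pow_le_of_lt_pow h₁ h₂]

theorem pow_add_mem (hG : IsDCSemigroup b G) {a c : ℕ} (ha : b ^ a ∈ G) (hc : b ^ c ∈ G) :
    b ^ (a + c) ∈ G :=
  pow_add b a c ▸ hG.2.1 _ ha _ hc

theorem pow_add_add_one_mem (hG : IsDCSemigroup b G) (hb : 2 ≤ b) {a c : ℕ}
    (h : 2 < b ∨ 1 ≤ a ∧ 1 ≤ c) (ha : b ^ a ∈ G) (hc : b ^ c ∈ G) : b ^ (a + c + 1) ∈ G := by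
  have hmax : ∀ {n}, b ^ n ∈ G → b ^ (n + 1) - 1 ∈ G := fun {n} hn =>
    hG.mem_of_pow_mem hb hn (by have := Nat.pow_lt_pow_succ (n := n) hb; omega)
      (Nat.sub_lt (Nat.pow_pos (by omega)) one_pos)
  refine hG.pow_mem_of_mem hb (hG.2.1 _ (hmax ha) _ (hmax hc)) (pow_add_add_one_le_mul hb h) ?_
  calc (b ^ (a + 1) - 1) * (b ^ (c + 1) - 1) < b ^ (a + 1) * b ^ (c + 1) :=
        Nat.mul_lt_mul'' (Nat.sub_lt (by positivity) one_pos) (Nat.sub_lt (by positivity) one_pos)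
    _ = b ^ (a + c + 1 + 1) := by ring

theorem Ib_subset_iff (hG : IsDCSemigroup b G) (hb : 1 < b) {i k : ℕ} :
    Ib b i k ⊆ G ↔ Set.Ico i (i + k) ⊆ {a | b ^ a ∈ G} := by
  constructor
  · rintro h a ⟨ha₁, ha₂⟩
    exact h ⟨Nat.pow_le_pow_right (by omega) ha₁, Nat.pow_lt_pow_right hb ha₂⟩
  · rintro h x ⟨hx₁, hx₂⟩
    have hx : x ≠ 0 := (Nat.pow_pos (n := i) (by omega)).trans_le hx₁ |>.ne'
    refine hG.mem_of_pow_mem hb (h ⟨?_, ?_⟩) (Nat.pow_log_le_self b hx)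
      (Nat.lt_pow_succ_log_self hb x)
    · exact (Nat.le_log_iff_pow_le hb hx).mpr hx₁
    · exact (Nat.log_lt_iff_lt_pow hb hx).mpr hx₂

end IsDCSemigroup

theorem stmt_4 (b : ℕ) (hb : 2 ≤ b) (G : Set ℕ) (hG : IsDCSemigroup b G)
    (j l : ℕ) (hl : 0 < l) (hIb : Ib b j l ⊆ G)
    (hcase : 2 < b ∨ 2 ≤ j + l) :
    ∀ q : ℕ, 0 < q → Ib b (q * j) (q * l) ⊆ G := by
  intro q hq
  rw [hG.Ib_subset_iff hb] at hIb ⊢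
  have hadd := fun a (ha : b ^ a ∈ G) c (hc : b ^ c ∈ G) => hG.pow_add_mem ha hc
  rcases hcase with hb3 | hjl
  · exact Set.Ico_mul_subset_of_add_mem (m := 0) hadd
      (fun _ ha _ hc _ _ => hG.pow_add_add_one_mem hb (.inl hb3) ha hc) hl (by omega) hIb hq
  · exact Set.Ico_mul_subset_of_add_mem (m := 1) hadd
      (fun _ ha _ hc ha₁ hc₁ => hG.pow_add_add_one_mem hb (.inr ⟨ha₁, hc₁⟩) ha hc) hl hjl hIb hq
end

section
/- Let b ≥ 2 be an integer, G a b-dc-semigroup, j a non-negative integer and l a positive integer such that I_b(j,l) ⊆ G. Put d = ⌈j/l⌉ and assume d ≥ 1. Then every integer x with x ≥ b^{d·j} belongs to G. -/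
theorem Nat.log_pow_succ_sub_one {b : ℕ} (hb : 1 < b) (m : ℕ) :
    Nat.log b (b ^ (m + 1) - 1) = m := by
  have := Nat.pow_lt_pow_right hb (lt_add_one m)
  exact Nat.log_eq_of_pow_le_of_lt_pow (by omega) (by omega)

theorem Nat.log_pow_succ_sub_one_mul {b m m' : ℕ} (hb : 2 ≤ b) (hm : 0 < m) (hm' : 0 < m') :
    Nat.log b ((b ^ (m + 1) - 1) * (b ^ (m' + 1) - 1)) = m + m' + 1 := by
  have hprod : b ^ (m + 1) * b ^ (m' + 1) = b * b ^ (m + m' + 1) := by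
    rw [← pow_add, ← pow_succ']; congr 1; omega
  have hx : 2 * b ^ (m + 1) ≤ b ^ (m + m' + 1) := by
    rw [show m + m' + 1 = m' + (m + 1) by omega, pow_add b m']
    exact Nat.mul_le_mul_right _ (hb.trans (Nat.le_self_pow hm'.ne' b))
  have hy : 2 * b ^ (m' + 1) ≤ b ^ (m + m' + 1) := by
    rw [show m + m' + 1 = m + (m' + 1) by omega, pow_add b m]
    exact Nat.mul_le_mul_right _ (hb.trans (Nat.le_self_pow hm.ne' b))
  have hx1 : 1 ≤ b ^ (m + 1) := Nat.one_le_pow _ _ (by omega)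
  have hy1 : 1 ≤ b ^ (m' + 1) := Nat.one_le_pow _ _ (by omega)
  apply Nat.log_eq_of_pow_le_of_lt_pow
  · -- `(X - 1) (Y - 1) = b N - X - Y + 1` with `X, Y ≤ N / 2`, where `N = b ^ (m + m' + 1)`
    generalize b ^ (m + 1) = X, b ^ (m' + 1) = Y, b ^ (m + m' + 1) = N at *
    zify [hx1, hy1] at *
    nlinarith
  · calc (b ^ (m + 1) - 1) * (b ^ (m' + 1) - 1) < b ^ (m + 1) * b ^ (m' + 1) :=
          Nat.mul_lt_mul_of_lt_of_le (by omega) (by omega) (by omega)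
      _ = b ^ (m + m' + 1 + 1) := by rw [hprod, ← pow_succ']

def fullLogSet (b : ℕ) (G : Set ℕ) : Set ℕ :=
  {m | ∀ y, 0 < y → Nat.log b y = m → y ∈ G}

section fullLogSet

variable {b : ℕ} {G : Set ℕ} {m m' : ℕ}

theorem pow_mem_of_mem_fullLogSet (hb : 1 < b) (hm : m ∈ fullLogSet b G) : b ^ m ∈ G :=
  hm _ (Nat.pow_pos (by omega)) (Nat.log_pow hb m)

theorem Ico_subset_fullLogSet_of_Ib_subset (hb : 1 < b) {j l : ℕ} (h : Ib b j l ⊆ G) :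
    Set.Ico j (j + l) ⊆ fullLogSet b G := by
  rintro m ⟨hjm, hml⟩ y hy rfl
  refine h ⟨?_, ?_⟩
  · exact (Nat.pow_le_pow_right (by omega) hjm).trans (Nat.pow_log_le_self b hy.ne')
  · exact (Nat.lt_pow_succ_log_self hb y).trans_le (Nat.pow_le_pow_right (by omega) hml)

namespace IsDCSemigroup

variable (hG : IsDCSemigroup b G)
include hG

theorem log_mem_fullLogSet {x : ℕ} (hx : x ∈ G) : Nat.log b x ∈ fullLogSet b G :=
  fun y hy hlog => hG.2.2 x hx y hy hlog

theorem add_mem_fullLogSet (hb : 1 < b) (hm : m ∈ fullLogSet b G) (hm' : m' ∈ fullLogSet b G) :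
    m + m' ∈ fullLogSet b G := by
  have := hG.log_mem_fullLogSet
    (hG.2.1 _ (pow_mem_of_mem_fullLogSet hb hm) _ (pow_mem_of_mem_fullLogSet hb hm'))
  rwa [← pow_add, Nat.log_pow hb] at this

theorem add_add_one_mem_fullLogSet (hb : 2 ≤ b) (hm : m ∈ fullLogSet b G)
    (hm' : m' ∈ fullLogSet b G) (hm0 : 0 < m) (hm0' : 0 < m') :
    m + m' + 1 ∈ fullLogSet b G := by
  have hmem {n : ℕ} (hn : n ∈ fullLogSet b G) : b ^ (n + 1) - 1 ∈ G :=
    hn _ (Nat.sub_pos_of_lt (Nat.one_lt_pow n.succ_ne_zero hb)) (Nat.log_pow_succ_sub_one hb n)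
  have := hG.log_mem_fullLogSet (hG.2.1 _ (hmem hm) _ (hmem hm'))
  rwa [Nat.log_pow_succ_sub_one_mul hb hm0 hm0'] at this

end IsDCSemigroup

end fullLogSet

section AdditiveClosure

variable {S : Set ℕ} (hadd : ∀ m ∈ S, ∀ m' ∈ S, m + m' ∈ S)
include hadd

theorem Ici_subset_of_Ico_subset {a j : ℕ} (hj0 : 0 < j) (hj : j ∈ S)
    (h : Set.Ico a (a + j) ⊆ S) : Set.Ici a ⊆ S := by
  intro m hm
  induction m using Nat.strong_induction_on with
  | _ m ih =>
    by_cases hlt : m < a + j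
    · exact h ⟨hm, hlt⟩
    · have := hadd _ (ih (m - j) (by omega) (by simp only [Set.mem_Ici] at hm ⊢; omega)) _ hj
      rwa [Nat.sub_add_cancel (by omega)] at this

variable (hadd1 : ∀ m ∈ S, ∀ m' ∈ S, 0 < m → 0 < m' → m + m' + 1 ∈ S)
include hadd1

theorem Ico_mul_subset {j l : ℕ} (hj : 0 < j) (hl : 0 < l) (h : Set.Ico j (j + l) ⊆ S)
    {k : ℕ} (hk : 0 < k) : Set.Ico (k * j) (k * (j + l)) ⊆ S := by
  induction k, hk using Nat.le_induction with
  | base => simpa using h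
  | succ k hk ih =>
    rintro m ⟨hm1, hm2⟩
    rw [add_one_mul] at hm1 hm2
    have hkj : j ≤ k * j := Nat.le_mul_of_pos_left j hk
    have hkl : l ≤ k * l := Nat.le_mul_of_pos_left l hk
    by_cases hlt : m - j < k * (j + l)
    · -- `m = (m - j) + j`
      have := hadd _ (ih ⟨by omega, hlt⟩) _ (h ⟨le_rfl, by omega⟩)
      rwa [Nat.sub_add_cancel (by omega)] at this
    · -- `m = (k (j + l) - 1) + (m - k (j + l)) + 1`
      rw [mul_add] at hlt hm2 ih
      have := hadd1 (k * j + k * l - 1) (ih ⟨by omega, by omega⟩)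
        (m - (k * j + k * l)) (h ⟨by omega, by omega⟩) (by omega) (by omega)
      rwa [show k * j + k * l - 1 + (m - (k * j + k * l)) + 1 = m by omega] at this

end AdditiveClosure

theorem stmt_5 (b : ℕ) (hb : 2 ≤ b) (G : Set ℕ) (hG : IsDCSemigroup b G)
    (j l : ℕ) (hl : 0 < l) (hIb : Ib b j l ⊆ G)
    (d : ℕ) (hd : d = j ⌈/⌉ l) (hd1 : 1 ≤ d) :
    ∀ x : ℕ, b ^ (d * j) ≤ x → x ∈ G := by
  intro x hx
  have hb1 : 1 < b := hb
  have hj : 0 < j := Nat.pos_of_ne_zero fun hj => by simp [hj] at hd; omega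
  have hjd : j ≤ d * l := by rw [hd, mul_comm]; exact le_smul_ceilDiv hl
  have hbase := Ico_subset_fullLogSet_of_Ib_subset hb1 hIb
  have hadd : ∀ m ∈ fullLogSet b G, ∀ m' ∈ fullLogSet b G, m + m' ∈ fullLogSet b G :=
    fun _ hm _ hm' => hG.add_mem_fullLogSet hb1 hm hm'
  have hinterval : Set.Ico (d * j) (d * j + j) ⊆ fullLogSet b G := fun m hm =>
    Ico_mul_subset hadd (fun _ hm _ hm' => hG.add_add_one_mem_fullLogSet hb hm hm')
      hj hl hbase hd1 ⟨hm.1, by rw [mul_add]; exact hm.2.trans_le (by omega)⟩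
  have hx0 : 0 < x := (Nat.pow_pos (by omega)).trans_le hx
  refine Ici_subset_of_Ico_subset hadd hj (hbase ⟨le_rfl, by omega⟩) hinterval ?_ x hx0 rfl
  exact (Nat.le_log_iff_pow_le hb1 hx0.ne').mpr hx
end

section
/- Let G be a 2-dc-semigroup and suppose that I_2(0,l) ⊆ G for some integer l ≥ 2, that is, G contains all integers x with 1 ≤ x < 2^l. Then G is the set of all positive integers. -/
theorem stmt_6 (G : Set ℕ) (hG : IsDCSemigroup 2 G)
    (l : ℕ) (hl : 2 ≤ l) (hIb : ∀ x : ℕ, 1 ≤ x → x < 2 ^ l → x ∈ G) :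
    G = {x : ℕ | 0 < x} := by
  have h2 : (2 : ℕ) ∈ G := by
    apply hIb 2 (by norm_num)
    calc (2:ℕ) < 2 ^ 2 := by norm_num
    _ ≤ 2 ^ l := Nat.pow_le_pow_right (by norm_num) hl
  have hpow : ∀ k : ℕ, (2 : ℕ) ^ k ∈ G := by
    intro k
    induction k with
    | zero => exact hIb 1 le_rfl (Nat.one_lt_two_pow (by omega))
    | succ n ih =>
      rw [pow_succ]
      exact hG.2.1 _ ih _ h2
  ext n
  simp only [Set.mem_setOf_eq]
  constructor
  · exact hG.1 n
  · intro hn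
    exact hG.2.2 _ (hpow (Nat.log 2 n)) n hn (by rw [Nat.log_pow (by norm_num)])
end

section
/- Let b > 2 be an integer and G a b-dc-semigroup such that I_b(0,1) ⊆ G, that is, G contains all integers x with 1 ≤ x < b. Then G is the set of all positive integers. -/
theorem stmt_7 (b : ℕ) (hb : 2 < b) (G : Set ℕ) (hG : IsDCSemigroup b G)
    (hIb : ∀ x : ℕ, 1 ≤ x → x < b → x ∈ G) :
    G = {x : ℕ | 0 < x} := by
  obtain ⟨hpos, hmul, hdig⟩ := hG
  have hb1 : 1 < b := by omega
  have hbm1 : b - 1 ∈ G := hIb (b - 1) (by omega) (by omega)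
  have hsq : (b - 1) * (b - 1) ∈ G := hmul _ hbm1 _ hbm1
  have hlogsq : Nat.log b ((b - 1) * (b - 1)) = 1 := by
    apply Nat.log_eq_of_pow_le_of_lt_pow
    · simp only [pow_one]
      have : 3 ≤ b := hb
      nlinarith [Nat.sub_add_cancel (by omega : 1 ≤ b)]
    · have h1 : b - 1 < b := by omega
      calc (b - 1) * (b - 1) < b * b := by
            exact Nat.mul_lt_mul_of_lt_of_lt h1 h1
        _ = b ^ (1 + 1) := by ring
  have hbG : b ∈ G := by
    apply hdig _ hsq b (by omega)
    rw [hlogsq, show Nat.log b b = 1 from by simpa using Nat.log_pow hb1 1]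
  have hpow : ∀ k : ℕ, b ^ k ∈ G := by
    intro k
    induction k with
    | zero => simpa using hIb 1 le_rfl (by omega)
    | succ n ih => rw [pow_succ]; exact hmul _ ih _ hbG
  ext x
  simp only [Set.mem_setOf_eq]
  constructor
  · exact hpos x
  · intro hx
    exact hdig _ (hpow (Nat.log b x)) x hx (Nat.log_pow hb1 _).symm
end

section
/- Let b ≥ 2 be an integer, X a nonempty set of positive integers, J = {⌊log_b x⌋ : x ∈ X}, and j_0 = min J. Assume j_0 ≥ 1 and that there is a positive integer l_0 with l_0 ≥ j_0 such that every integer in [j_0, j_0 + l_0) belongs to J (so that ⌈j_0/l_0⌉ = 1). Then I_b(j_0, ∞) = {x : x ≥ b^{j_0}} is the smallest b-dc-semigroup containing X; that is, it is a b-dc-semigroup, it contains X, and it is contained in every b-dc-semigroup containing X. -/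
/-! Since `x` and `b ^ ⌊log_b x⌋` have the same number of digits, a `b`-dc-semigroup `H`
containing `X` contains `b ^ n` for every `n ∈ J`, hence for `n ∈ [j₀, 2 j₀)`. Multiplying
by `b ^ j₀` propagates this to all `n ≥ j₀`, and then digit-closure gives every
`x ≥ b ^ j₀`. -/

theorem pow_mem_of_pow_mem_Ico {M : Type*} [Monoid M] {S : Set M}
    (hmul : ∀ x ∈ S, ∀ y ∈ S, x * y ∈ S) (a : M) {j : ℕ} (hj : 1 ≤ j)
    (h : ∀ n, j ≤ n → n < 2 * j → a ^ n ∈ S) : ∀ n, j ≤ n → a ^ n ∈ S := by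
  intro n
  induction n using Nat.strong_induction_on with
  | _ n ih =>
    intro hn
    by_cases hsmall : n < 2 * j
    · exact h n hn hsmall
    · have hsplit : a ^ n = a ^ j * a ^ (n - j) := by rw [← pow_add]; congr 1; omega
      rw [hsplit]
      exact hmul _ (ih j (by omega) le_rfl) _ (ih (n - j) (by omega) (by omega))

section

variable {b : ℕ}

theorem isDCSemigroup_setOf_pow_le (hb : 1 < b) (j : ℕ) :
    IsDCSemigroup b {x : ℕ | b ^ j ≤ x} := by
  have hpos : ∀ x : ℕ, b ^ j ≤ x → 0 < x := fun x hx => (pow_pos (by omega) j).trans_le hx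
  refine ⟨hpos, fun x hx y hy => ?_, fun x hx y hy hlog => ?_⟩
  · exact hx.trans (Nat.le_mul_of_pos_right x (hpos y hy))
  · refine Nat.pow_le_of_le_log hy.ne' ?_
    rw [hlog]
    exact Nat.le_log_of_pow_le hb hx

theorem IsDCSemigroup.mem_iff_pow_log_mem {H : Set ℕ} (hH : IsDCSemigroup b H) (hb : 1 < b)
    {y : ℕ} (hy : y ≠ 0) : y ∈ H ↔ b ^ Nat.log b y ∈ H := by
  constructor
  · intro hyH
    exact hH.2.2 y hyH _ (pow_pos (by omega) _) (Nat.log_pow hb _)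
  · intro hpow
    exact hH.2.2 _ hpow y (Nat.pos_of_ne_zero hy) (Nat.log_pow hb _).symm

end

theorem stmt_12_general (b : ℕ) (hb : 2 ≤ b) (X : Set ℕ)
    (J : Set ℕ) (hJ : J = {n : ℕ | ∃ x ∈ X, Nat.log b x = n})
    (j₀ : ℕ) (hj₀min : ∀ n ∈ J, j₀ ≤ n) (hj₀ : 1 ≤ j₀)
    (l₀ : ℕ) (hl₀ : j₀ ≤ l₀)
    (hfull : ∀ n : ℕ, j₀ ≤ n → n < j₀ + l₀ → n ∈ J) :
    IsDCSemigroup b {x : ℕ | b ^ j₀ ≤ x} ∧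
    X ⊆ {x : ℕ | b ^ j₀ ≤ x} ∧
    ∀ H : Set ℕ, IsDCSemigroup b H → X ⊆ H → {x : ℕ | b ^ j₀ ≤ x} ⊆ H := by
  subst hJ
  refine ⟨isDCSemigroup_setOf_pow_le hb j₀, fun x hx => ?_, fun H hH hXH x hx => ?_⟩
  · have hlog : j₀ ≤ Nat.log b x := hj₀min _ ⟨x, hx, rfl⟩
    -- `log_b 0 = 0 < j₀`
    have hx0 : x ≠ 0 := by rintro rfl; simp at hlog; omega
    exact Nat.pow_le_of_le_log hx0 hlog
  · have hpow : ∀ n, j₀ ≤ n → b ^ n ∈ H := by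
      refine pow_mem_of_pow_mem_Ico hH.2.1 b hj₀ fun n hn hn' => ?_
      obtain ⟨y, hyX, rfl⟩ := hfull n hn (by omega)
      exact (hH.mem_iff_pow_log_mem hb (hH.1 y (hXH hyX)).ne').1 (hXH hyX)
    have hx0 : x ≠ 0 := ((pow_pos (by omega) j₀).trans_le hx).ne'
    exact (hH.mem_iff_pow_log_mem hb hx0).2 (hpow _ (Nat.le_log_of_pow_le hb hx))

theorem stmt_12 (b : ℕ) (hb : 2 ≤ b) (X : Set ℕ) (hXne : X.Nonempty)
    (hXpos : ∀ x ∈ X, 0 < x)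
    (J : Set ℕ) (hJ : J = {n : ℕ | ∃ x ∈ X, Nat.log b x = n})
    (j₀ : ℕ) (hj₀mem : j₀ ∈ J) (hj₀min : ∀ n ∈ J, j₀ ≤ n) (hj₀ : 1 ≤ j₀)
    (l₀ : ℕ) (hl₀pos : 0 < l₀) (hl₀ : j₀ ≤ l₀)
    (hfull : ∀ n : ℕ, j₀ ≤ n → n < j₀ + l₀ → n ∈ J) :
    IsDCSemigroup b {x : ℕ | b ^ j₀ ≤ x} ∧
    X ⊆ {x : ℕ | b ^ j₀ ≤ x} ∧
    ∀ H : Set ℕ, IsDCSemigroup b H → X ⊆ H → {x : ℕ | b ^ j₀ ≤ x} ⊆ H :=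
  stmt_12_general b hb X J hJ j₀ hj₀min hj₀ l₀ hl₀ hfull
end

section
/- Let b > 2 be an integer and X a set of positive integers containing some element x with 1 ≤ x < b. Then every b-dc-semigroup containing X is the set of all positive integers; in particular, the smallest b-dc-semigroup containing X is the set of all positive integers. -/
theorem stmt_14 (b : ℕ) (hb : 2 < b) (X : Set ℕ) (hXpos : ∀ x ∈ X, 0 < x)
    (hX : ∃ x ∈ X, 1 ≤ x ∧ x < b) :
    (∀ H : Set ℕ, IsDCSemigroup b H → X ⊆ H → H = {x : ℕ | 0 < x}) ∧
    IsDCSemigroup b {x : ℕ | 0 < x} ∧ X ⊆ {x : ℕ | 0 < x} := by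
  refine ⟨?_, ⟨fun x hx => hx, fun x hx y hy => Nat.mul_pos hx hy,
    fun x hx y hy _ => hy⟩, fun x hx => hXpos x hx⟩
  intro H ⟨hpos, hmul, hdig⟩ hXH
  obtain ⟨x, hxX, hx1, hxb⟩ := hX
  have hxH : x ∈ H := hXH hxX
  have hlogx : Nat.log b x = 0 := Nat.log_eq_zero_iff.mpr (Or.inl hxb)
  -- every y with 0 < y < b is in H
  have hsmall : ∀ y : ℕ, 0 < y → y < b → y ∈ H := by
    intro y hy hyb
    exact hdig x hxH y hy (by rw [hlogx]; exact Nat.log_eq_zero_iff.mpr (Or.inl hyb))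
  have h2 : (2 : ℕ) ∈ H := hsmall 2 (by norm_num) hb
  have hbm1 : (b - 1) ∈ H := hsmall (b - 1) (by omega) (by omega)
  -- 2 * (b-1) has log = 1
  have hprod : 2 * (b - 1) ∈ H := hmul 2 h2 (b - 1) hbm1
  have hlogprod : Nat.log b (2 * (b - 1)) = 1 := by
    have hbb : b + b ≤ b * b := by nlinarith
    exact Nat.log_eq_one_iff'.mpr ⟨by omega, by omega⟩
  -- b ∈ H
  have hbH : b ∈ H := by
    apply hdig _ hprod b (by omega)
    rw [hlogprod]; exact Nat.log_eq_one_iff'.mpr ⟨le_refl b, by nlinarith⟩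
  -- b^k ∈ H for k ≥ 1
  have hpow : ∀ k : ℕ, b ^ (k + 1) ∈ H := by
    intro k
    induction k with
    | zero => simpa using hbH
    | succ n ih => rw [pow_succ]; exact hmul _ ih b hbH
  -- conclude
  ext n
  simp only [Set.mem_setOf_eq]
  constructor
  · exact hpos n
  · intro hn
    rcases Nat.eq_zero_or_pos (Nat.log b n) with h0 | h1
    · apply hdig x hxH n hn; rw [h0, hlogx]
    · obtain ⟨k, hk⟩ := Nat.exists_eq_add_of_le h1
      apply hdig _ (hpow k) n hn
      rw [Nat.log_pow (by omega)]
      omega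
end
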